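/- arXiv:1509.03380 — 2 statements merged into one kernel-verified Lean document; each statement's English description precedes it below -/
import Mathlib

section
/- If at least one of G or H is a tree, then the homomorphism γ: Pic(G)×Pic(H)→Pic(Δ) induced by β is surjective, for every choice of triangulated product Δ of G and H. -/
open scoped Classical
open Finset

section TriangulatedProduct

variable {VG VH : Type*}

/-- The column of the Laplacian matrix of `G` indexed by the vertex `w`:
its entry at `v` is `-deg v` if `v = w`, `1` if `v` is adjacent to `w`, and `0` otherwise. -/
noncomputable def lapCol (G : SimpleGraph VG) [Fintype VG] (w v : VG) : ℤ :=
  if v = w then -(((Finset.univ.filter (fun u => G.Adj v u)).card : ℤ))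
  else if G.Adj v w then 1 else 0

/-- A divisor on a finite graph is principal if it lies in the ℤ-span of the
columns of the Laplacian matrix of the graph. -/
def GraphPrincipal (G : SimpleGraph VG) [Fintype VG] (D : VG → ℤ) : Prop :=
  ∃ f : VG → ℤ, ∀ v, D v = ∑ w, f w * lapCol G w v

/-- A triangulated product of the graphs `G` and `H`: for each square
(an edge `aa'` of `G` together with an edge `bb'` of `H`) exactly one of the two
possible diagonals `{(a,b),(a',b')}`, `{(a,b'),(a',b)}` is chosen.  The structure
records the resulting symmetric "diagonal edge" relation. -/
structure TriProd (G : SimpleGraph VG) (H : SimpleGraph VH) where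
  diag : VG × VH → VG × VH → Prop
  diag_symm : ∀ u v, diag u v → diag v u
  diag_adj : ∀ a a' b b', diag (a, b) (a', b') → G.Adj a a' ∧ H.Adj b b'
  diag_choice : ∀ a a' b b', G.Adj a a' → H.Adj b b' →
    (diag (a, b) (a', b') ∧ ¬ diag (a, b') (a', b)) ∨
    (¬ diag (a, b) (a', b') ∧ diag (a, b') (a', b))

namespace TriProd

variable {G : SimpleGraph VG} {H : SimpleGraph VH}

/-- `u` and `v` form an edge of the triangulated product: a horizontal edge,
a vertical edge, or a diagonal edge. -/
def Adj (T : TriProd G H) (u v : VG × VH) : Prop :=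
  (u.2 = v.2 ∧ G.Adj u.1 v.1) ∨ (u.1 = v.1 ∧ H.Adj u.2 v.2) ∨ T.diag u v

/-- `{u, v, w}` is a triangle (2-face) of the triangulated product. -/
def IsFace (T : TriProd G H) (u v w : VG × VH) : Prop :=
  ∃ a a' b b', T.diag (a, b) (a', b') ∧
    ({u, v, w} : Finset (VG × VH)) = {(a, b), (a', b'), (a', b)}

/-- `{u, v, w}` is a triangle of the triangulated product whose diagonal edge
does not contain the vertex `x`. -/
def IsFaceAvoiding (T : TriProd G H) (u v w x : VG × VH) : Prop :=
  ∃ a a' b b', T.diag (a, b) (a', b') ∧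
    ({u, v, w} : Finset (VG × VH)) = {(a, b), (a', b'), (a', b)} ∧
    x ≠ (a, b) ∧ x ≠ (a', b')

variable [Fintype VG] [Fintype VH]

/-- The structure constant `α(e, x)` for the edge `e = {u, v}` of the
triangulated product and the vertex `x`. -/
noncomputable def alpha (T : TriProd G H) (u v x : VG × VH) : ℤ :=
  if x = u ∨ x = v then
    (if T.diag u v then 1
     else ((Finset.univ.filter (fun w => T.IsFaceAvoiding u v w x)).card : ℤ))
  else 0

/-- The divisor of the function `φ`, evaluated at the edge `{u, v}` of the
triangulated product: the sum of `φ` over the third vertices of the triangles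
containing `{u, v}`, minus `α({u,v},u) φ(u) + α({u,v},v) φ(v)`. -/
noncomputable def Div (T : TriProd G H) (φ : VG × VH → ℤ) (u v : VG × VH) : ℤ :=
  (∑ w ∈ Finset.univ.filter (fun w => T.IsFace u v w), φ w)
    - (T.alpha u v u * φ u + T.alpha u v v * φ v)

/-- A divisor on the triangulated product (a function on edges, encoded as a
function on ordered pairs of vertices) is principal if it agrees with `Div φ`
on every edge, for some `φ`. -/
def Principal (T : TriProd G H) (D : VG × VH → VG × VH → ℤ) : Prop :=
  ∃ φ : VG × VH → ℤ, ∀ u v, T.Adj u v → D u v = T.Div φ u v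

/-- A divisor on the triangulated product is Cartier if near every vertex `x`
it agrees with a principal divisor on all edges containing `x`. -/
def Cartier (T : TriProd G H) (D : VG × VH → VG × VH → ℤ) : Prop :=
  ∀ x : VG × VH, ∃ φ : VG × VH → ℤ,
    ∀ u v, T.Adj u v → (x = u ∨ x = v) → D u v = T.Div φ u v

/-- A divisor is ℚ-Cartier if some nonzero integer multiple of it is Cartier. -/
def QCartier (T : TriProd G H) (D : VG × VH → VG × VH → ℤ) : Prop :=
  ∃ m : ℤ, m ≠ 0 ∧ T.Cartier (fun u v => m * D u v)

/-- The balancing conditions for a divisor `D` on the triangulated product. -/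
def Balanced (T : TriProd G H) (D : VG × VH → VG × VH → ℤ) : Prop :=
  ∀ a : VG, ∀ b : VH,
    (∀ x x' : VG, G.Adj a x → G.Adj a x' →
      (∑ c ∈ Finset.univ.filter (fun c : VH => T.Adj (a, b) (x, c)), D (a, b) (x, c)) =
      (∑ c ∈ Finset.univ.filter (fun c : VH => T.Adj (a, b) (x', c)), D (a, b) (x', c))) ∧
    (∀ y y' : VH, H.Adj b y → H.Adj b y' →
      (∑ c ∈ Finset.univ.filter (fun c : VG => T.Adj (a, b) (c, y)), D (a, b) (c, y)) =
      (∑ c ∈ Finset.univ.filter (fun c : VG => T.Adj (a, b) (c, y')), D (a, b) (c, y')))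

end TriProd

/-- The map `β` sending a pair of divisors on `G` and `H` to a divisor on the
triangulated product: `C(a)` on vertical edges `{(a,b),(a,b')}`, `D(b)` on
horizontal edges `{(a,b),(a',b)}`, and `0` on diagonal edges. -/
noncomputable def beta (C : VG → ℤ) (D : VH → ℤ) (u v : VG × VH) : ℤ :=
  if u.1 = v.1 then C u.1 else if u.2 = v.2 then D u.2 else 0

end TriangulatedProduct

/-!
Over a square `{a, a'} × {b, b'}` the signed value of a divisor `P` on the diagonal plays the role
of the mixed second difference of a potential. Comparing the local potentials of a Cartier divisor
at `(a, b)` and `(a, b')` shows that, for fixed `a`, the sum of these square values over the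
neighbours `a'` of `a` is a coboundary in the `H`-direction. When `G` is a tree, summing over the
component of `a` in `G` minus the bridge `aa'` isolates a single square value, which is therefore
itself a coboundary; integrating along the tree gives `φ` with `P = Div φ` on every diagonal
(a tree `H` is handled by exchanging the factors).
The remainder `Q = P - Div φ` vanishes on diagonals, so its local potential at `(a, b)` makes
`Q` on a vertical edge `{(a, b), (a, b')}` depend on `(a, b)` only; as `Q` is symmetric and `H`
is connected, it is a function `C a` of `a`, and likewise on horizontal edges, so `Q = β(C, D)`.
-/

namespace SimpleGraph

variable {V : Type*} {G : SimpleGraph V}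

theorem IsAcyclic.eq_concat_or_eq_concat (hG : G.IsAcyclic) {r a a' : V} {p : G.Walk r a}
    {q : G.Walk r a'} (hp : p.IsPath) (hq : q.IsPath) (h : G.Adj a a') :
    q = p.concat h ∨ p = q.concat h.symm := by
  by_cases ha : a ∈ q.support
  · exact .inl (hG.path_concat hp hq h ha)
  · exact .inr (hG.path_concat hq hp h.symm
      (hG.mem_support_of_ne_mem_support_of_adj_of_isPath hp hq h ha))

theorem IsTree.exists_potential {A B : Type*} [AddCommGroup A] [AddCommGroup B]
    (hT : G.IsTree) (f : A →+ B) {w : V → V → B}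
    (hanti : ∀ a a', G.Adj a a' → w a' a = -w a a')
    (hw : ∀ a a', G.Adj a a' → w a a' ∈ f.range) :
    ∃ ψ : V → A, ∀ a a', G.Adj a a' → f (ψ a' - ψ a) = w a a' := by
  obtain ⟨r⟩ := hT.connected.nonempty
  let path (x : V) : G.Path r x := (hT.connected.preconnected r x).some.toPath
  let pot (x : V) : B := ((path x : G.Walk r x).darts.map fun d => w d.fst d.snd).sum
  have pot_mem (x : V) : pot x ∈ f.range := by
    refine AddSubgroup.list_sum_mem _ fun _ hb => ?_
    obtain ⟨d, -, rfl⟩ := List.mem_map.mp hb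
    exact hw _ _ d.adj
  choose ψ hψ using pot_mem
  refine ⟨ψ, fun a a' h => ?_⟩
  rw [map_sub, hψ, hψ, sub_eq_iff_eq_add']
  rcases hT.isAcyclic.eq_concat_or_eq_concat (path a).isPath (path a').isPath h with he | he
  · simp [pot, he, Walk.darts_concat]
  · simp [pot, he, Walk.darts_concat, hanti a a' h]

theorem sum_sum_adj_eq_sum_sum_adj_notMem [Fintype V] {M : Type*} [AddCommGroup M]
    (B : Finset V) {w : V → V → M} (hanti : ∀ a a', G.Adj a a' → w a' a = -w a a') :
    ∑ v ∈ B, ∑ c ∈ univ.filter (G.Adj v), w v c =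
      ∑ v ∈ B, ∑ c ∈ (univ.filter (G.Adj v)).filter (· ∉ B), w v c := by
  have hinner : ∑ v ∈ B, ∑ c ∈ (univ.filter (G.Adj v)).filter (· ∈ B), w v c = 0 := by
    have hfilter (v : V) : (univ.filter (G.Adj v)).filter (· ∈ B) = B.filter (G.Adj v) := by
      ext; simp [and_comm]
    simp_rw [hfilter, sum_filter, ← sum_product' (f := fun v c => if G.Adj v c then w v c else 0)]
    refine sum_involution (fun x _ => x.swap) (fun x _ => ?_) (fun x _ hx => ?_)
      (fun x hx => mem_product.mpr (mem_product.mp hx).symm) (fun x _ => x.swap_swap)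
    · by_cases h : G.Adj x.1 x.2
      · simp [h, h.symm, hanti _ _ h]
      · simp [h, mt G.adj_symm h]
    · rintro hs
      obtain ⟨v, c⟩ := x
      simp only [Prod.swap_prod_mk, Prod.mk.injEq] at hs
      simp [hs.1] at hx
  simp_rw [← sum_filter_add_sum_filter_not (univ.filter (G.Adj _)) (· ∈ B), sum_add_distrib,
    hinner, zero_add]

theorem IsTree.mem_of_sum_adj_mem [Fintype V] {M : Type*} [AddCommGroup M] (hT : G.IsTree)
    (S : AddSubgroup M) {w : V → V → M} (hanti : ∀ a a', G.Adj a a' → w a' a = -w a a')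
    (hdiv : ∀ v, ∑ c ∈ univ.filter (G.Adj v), w v c ∈ S) {a a' : V} (h : G.Adj a a') :
    w a a' ∈ S := by
  -- `B` is the side of `a` of the bridge `aa'`, so `aa'` is the only edge leaving `B`.
  set B := univ.filter ((G.deleteEdges {s(a, a')}).Reachable a)
  have ha : a ∈ B := by simp [B]
  have ha' : a' ∉ B := by
    simpa [B] using isBridge_iff.mp (isAcyclic_iff_forall_adj_isBridge.mp hT.isAcyclic h)
  have hcut : ∀ v ∈ B, ∀ c, G.Adj v c → c ∉ B → v = a ∧ c = a' := by
    intro v hv c hvc hc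
    by_cases he : s(v, c) = s(a, a')
    · rcases Sym2.eq_iff.mp he with hva | ⟨rfl, rfl⟩
      · exact hva
      · exact absurd hv ha'
    · simp only [B, mem_filter, mem_univ, true_and] at hv hc
      exact absurd (hv.trans (Adj.reachable (by simp [hvc, he]))) hc
  have hout : ∑ v ∈ B, ∑ c ∈ (univ.filter (G.Adj v)).filter (· ∉ B), w v c = w a a' := by
    rw [sum_eq_single_of_mem a ha, sum_eq_single_of_mem a' (by simp [h, ha'])]
    · intro c hc hca'
      simp only [mem_filter, mem_univ, true_and] at hc
      exact absurd (hcut a ha c hc.1 hc.2).2 hca'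
    · intro v hv hva
      refine sum_eq_zero fun c hc => ?_
      simp only [mem_filter, mem_univ, true_and] at hc
      exact absurd (hcut v hv c hc.1 hc.2).1 hva
  rw [← hout, ← sum_sum_adj_eq_sum_sum_adj_notMem B hanti]
  exact sum_mem fun v _ => hdiv v

theorem Reachable.eq_of_forall_adj_eq {α : Type*} {f : V → α} {u v : V} (h : G.Reachable u v)
    (hf : ∀ x y, G.Adj x y → f x = f y) : f u = f v := by
  obtain ⟨p⟩ := h
  induction p with
  | nil => rfl
  | cons hadj _ ih => exact (hf _ _ hadj).trans ih

variable (G) in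
def coboundary (M : Type*) [AddCommGroup M] : (V → M) →+ (G.Dart → M) :=
  AddMonoidHom.mk' (fun f d => f d.snd - f d.fst) fun f g => by
    ext; simp only [Pi.add_apply]; abel

end SimpleGraph

namespace TriProd

variable {VG VH : Type*} {G : SimpleGraph VG} {H : SimpleGraph VH} (T : TriProd G H)

theorem ne_of_diag {p q : VG × VH} (h : T.diag p q) : p.1 ≠ q.1 ∧ p.2 ≠ q.2 :=
  ⟨(T.diag_adj p.1 q.1 p.2 q.2 h).1.ne, (T.diag_adj p.1 q.1 p.2 q.2 h).2.ne⟩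

theorem not_diag_of_fst_eq {p q : VG × VH} (h : p.1 = q.1) : ¬T.diag p q :=
  fun hd => (T.ne_of_diag hd).1 h

theorem not_diag_of_snd_eq {p q : VG × VH} (h : p.2 = q.2) : ¬T.diag p q :=
  fun hd => (T.ne_of_diag hd).2 h

theorem diag_comm {u v : VG × VH} : T.diag u v ↔ T.diag v u :=
  ⟨T.diag_symm u v, T.diag_symm v u⟩

theorem diag_iff_not_diag {a a' : VG} {b b' : VH} (ha : G.Adj a a') (hb : H.Adj b b') :
    T.diag (a, b) (a', b') ↔ ¬T.diag (a, b') (a', b) := by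
  rcases T.diag_choice a a' b b' ha hb with h | h <;> tauto

theorem isFace_comm {u v w : VG × VH} : T.IsFace u v w ↔ T.IsFace v u w := by
  simp only [IsFace, Finset.insert_comm u v]

theorem isFaceAvoiding_comm {u v w x : VG × VH} :
    T.IsFaceAvoiding u v w x ↔ T.IsFaceAvoiding v u w x := by
  simp only [IsFaceAvoiding, Finset.insert_comm u v]

theorem isFace_of_diag_iff {a a' : VG} {b b' : VH} (hd : T.diag (a, b) (a', b'))
    {w : VG × VH} : T.IsFace (a, b) (a', b') w ↔ w = (a', b) ∨ w = (a, b') := by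
  obtain ⟨ha, hb⟩ := T.ne_of_diag hd
  constructor
  · rintro ⟨x, x', y, y', hd', hset⟩
    obtain ⟨hx, hy⟩ := T.ne_of_diag hd'
    have h1 : (a, b) ∈ ({(x, y), (x', y'), (x', y)} : Finset _) := hset ▸ by simp
    have h2 : (a', b') ∈ ({(x, y), (x', y'), (x', y)} : Finset _) := hset ▸ by simp
    have h3 : w ∈ ({(x, y), (x', y'), (x', y)} : Finset _) := hset ▸ by simp
    have h4 : (x', y) ∈ ({(a, b), (a', b'), w} : Finset _) := hset ▸ by simp
    simp only [mem_insert, mem_singleton, Prod.mk.injEq] at h1 h2 h3 h4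
    simp only at hx hy
    grind
  · rintro (rfl | rfl)
    · exact ⟨a, a', b, b', hd, rfl⟩
    · exact ⟨a', a, b', b, T.diag_symm _ _ hd, by grind⟩

noncomputable def vertApex (a : VG) (b b' : VH) (c : VG) : VG × VH :=
  if T.diag (a, b) (c, b') then (c, b') else (c, b)

theorem isFace_vert_iff {a : VG} {b b' : VH} (hb : H.Adj b b') {w : VG × VH} :
    T.IsFace (a, b) (a, b') w ↔ ∃ c, G.Adj a c ∧ w = T.vertApex a b b' c := by
  constructor
  · rintro ⟨x, x', y, y', hd, hset⟩
    obtain ⟨hx, hy⟩ := T.ne_of_diag hd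
    have h1 : (a, b) ∈ ({(x, y), (x', y'), (x', y)} : Finset _) := hset ▸ by simp
    have h2 : (a, b') ∈ ({(x, y), (x', y'), (x', y)} : Finset _) := hset ▸ by simp
    have h3 : (x, y) ∈ ({(a, b), (a, b'), w} : Finset _) := hset ▸ by simp
    simp only [mem_insert, mem_singleton, Prod.mk.injEq] at h1 h2 h3
    simp only at hx hy
    have := hb.ne
    obtain ⟨rfl, rfl, hyy⟩ :
        a = x' ∧ w = (x, y) ∧ (y = b ∧ y' = b' ∨ y = b' ∧ y' = b) := by
      grind
    have hax : G.Adj a x := (T.diag_adj _ _ _ _ hd).1.symm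
    refine ⟨x, hax, ?_⟩
    rcases hyy with ⟨rfl, rfl⟩ | ⟨rfl, rfl⟩
    · rw [vertApex, if_neg fun h => (T.diag_iff_not_diag hax hb).mp h (T.diag_symm _ _ hd)]
    · rw [vertApex, if_pos (T.diag_symm _ _ hd)]
  · rintro ⟨c, hc, rfl⟩
    unfold vertApex
    split_ifs with hd
    · exact ⟨c, a, b', b, T.diag_symm _ _ hd, by grind⟩
    · exact ⟨c, a, b, b', T.diag_symm _ _ ((T.diag_iff_not_diag hc hb.symm).mpr hd), by grind⟩

theorem isFaceAvoiding_left_iff {u v w : VG × VH} (h : ¬T.diag u v) :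
    T.IsFaceAvoiding u v w u ↔ T.IsFace u v w ∧ ¬T.diag u w := by
  constructor
  · rintro ⟨x, x', y, y', hd, hset, hne, hne'⟩
    refine ⟨⟨x, x', y, y', hd, hset⟩, fun huw => ?_⟩
    have h1 : u ∈ ({(x, y), (x', y'), (x', y)} : Finset _) := hset ▸ by simp
    have h3 : w ∈ ({(x, y), (x', y'), (x', y)} : Finset _) := hset ▸ by simp
    simp only [mem_insert, mem_singleton] at h1 h3
    have := T.ne_of_diag huw
    grind
  · rintro ⟨⟨x, x', y, y', hd, hset⟩, huw⟩
    have h1 : (x, y) ∈ ({u, v, w} : Finset _) := hset ▸ by simp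
    have h2 : (x', y') ∈ ({u, v, w} : Finset _) := hset ▸ by simp
    simp only [mem_insert, mem_singleton] at h1 h2
    have := T.ne_of_diag hd
    have := T.diag_symm _ _ hd
    refine ⟨x, x', y, y', hd, hset, ?_, ?_⟩ <;> grind

def transpose : TriProd H G where
  diag u v := T.diag u.swap v.swap
  diag_symm _ _ h := T.diag_symm _ _ h
  diag_adj b b' a a' h := (T.diag_adj a a' b b' h).symm
  diag_choice b b' a a' hb ha := by
    rcases T.diag_choice a a' b b' ha hb with ⟨h1, h2⟩ | ⟨h1, h2⟩
    · exact .inl ⟨h1, fun h => h2 (T.diag_symm _ _ h)⟩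
    · exact .inr ⟨h1, T.diag_symm _ _ h2⟩

theorem adj_transpose {u v : VH × VG} : T.transpose.Adj u v ↔ T.Adj u.swap v.swap := by
  unfold Adj
  tauto

theorem IsFace.transpose {u v w : VG × VH} (h : T.IsFace u v w) :
    T.transpose.IsFace u.swap v.swap w.swap := by
  obtain ⟨a, a', b, b', hd, hset⟩ := h
  refine ⟨b', b, a', a, T.diag_symm _ _ hd, ?_⟩
  have := congrArg (Finset.image Prod.swap) hset
  simp only [image_insert, image_singleton, Prod.swap_prod_mk] at this
  rw [this, insert_comm]

theorem isFace_transpose {u v w : VH × VG} :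
    T.transpose.IsFace u v w ↔ T.IsFace u.swap v.swap w.swap :=
  ⟨fun h => h.transpose, fun h => h.transpose⟩

theorem IsFaceAvoiding.transpose {u v w x : VG × VH} (h : T.IsFaceAvoiding u v w x) :
    T.transpose.IsFaceAvoiding u.swap v.swap w.swap x.swap := by
  obtain ⟨a, a', b, b', hd, hset, hne, hne'⟩ := h
  refine ⟨b', b, a', a, T.diag_symm _ _ hd, ?_, ?_, ?_⟩
  · have := congrArg (Finset.image Prod.swap) hset
    simp only [image_insert, image_singleton, Prod.swap_prod_mk] at this
    rw [this, insert_comm]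
  · exact fun h => hne' (Prod.swap_injective h)
  · exact fun h => hne (Prod.swap_injective h)

theorem isFaceAvoiding_transpose {u v w x : VH × VG} :
    T.transpose.IsFaceAvoiding u v w x ↔ T.IsFaceAvoiding u.swap v.swap w.swap x.swap :=
  ⟨fun h => h.transpose, fun h => h.transpose⟩

/-- The value of `P` on the diagonal of the square `{a, a'} × {b, b'}`, signed so that for
`P = Div φ` it is the mixed difference `φ (a, b) - φ (a, b') - φ (a', b) + φ (a', b')`. -/
noncomputable def squareValue (P : VG × VH → VG × VH → ℤ) (a a' : VG) (b b' : VH) : ℤ :=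
  if T.diag (a, b) (a', b') then -P (a, b) (a', b') else P (a, b') (a', b)

theorem squareValue_swap_right {P : VG × VH → VG × VH → ℤ} {a a' : VG} {b b' : VH}
    (ha : G.Adj a a') (hb : H.Adj b b') :
    T.squareValue P a a' b' b = -T.squareValue P a a' b b' := by
  unfold squareValue
  rcases T.diag_choice a a' b b' ha hb with ⟨h1, h2⟩ | ⟨h1, h2⟩ <;> simp [h1, h2]

theorem squareValue_swap_left {P : VG × VH → VG × VH → ℤ} (hsymm : ∀ u v, P u v = P v u)
    {a a' : VG} {b b' : VH} (ha : G.Adj a a') (hb : H.Adj b b') :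
    T.squareValue P a' a b b' = -T.squareValue P a a' b b' := by
  unfold squareValue
  rcases T.diag_choice a a' b b' ha hb with ⟨h1, h2⟩ | ⟨h1, h2⟩
  · simp [h1, T.diag_comm.not.mp h2, hsymm (a', b')]
  · simp [h1, T.diag_comm.mp h2, hsymm (a', b)]

variable [Fintype VG] [Fintype VH]

theorem alpha_comm {u v x : VG × VH} : T.alpha u v x = T.alpha v u x := by
  unfold alpha
  refine if_congr or_comm (if_congr T.diag_comm rfl ?_) rfl
  rw [filter_congr fun w _ => T.isFaceAvoiding_comm]

theorem div_comm (φ : VG × VH → ℤ) (u v : VG × VH) : T.Div φ u v = T.Div φ v u := by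
  rw [Div, Div, filter_congr fun w _ => T.isFace_comm, T.alpha_comm (x := u),
    T.alpha_comm (x := v)]
  ring

theorem div_sub (φ ψ : VG × VH → ℤ) (u v : VG × VH) :
    T.Div (φ - ψ) u v = T.Div φ u v - T.Div ψ u v := by
  simp only [Div, Pi.sub_apply, sum_sub_distrib]
  ring

theorem div_of_diag {a a' : VG} {b b' : VH} (hd : T.diag (a, b) (a', b')) (φ : VG × VH → ℤ) :
    T.Div φ (a, b) (a', b') = φ (a', b) + φ (a, b') - φ (a, b) - φ (a', b') := by
  have hne : ((a', b) : VG × VH) ≠ (a, b') :=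
    fun h => (T.ne_of_diag hd).1 (congrArg Prod.fst h).symm
  have hfaces : univ.filter (T.IsFace (a, b) (a', b')) = {(a', b), (a, b')} := by
    ext w; simp [T.isFace_of_diag_iff hd]
  simp only [Div, alpha, hfaces, sum_pair hne, hd, true_or, or_true, if_true]
  ring

theorem div_of_not_diag {u v : VG × VH} (h : ¬T.diag u v) (φ : VG × VH → ℤ) :
    T.Div φ u v = ∑ w ∈ univ.filter (T.IsFace u v),
      (φ w - (if T.diag u w then 0 else φ u) - (if T.diag v w then 0 else φ v)) := by
  have hα (x y : VG × VH) (hxy : ¬T.diag x y) : T.alpha x y x * φ x =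
      ∑ w ∈ univ.filter (T.IsFace x y), if T.diag x w then 0 else φ x := by
    rw [alpha, if_pos (Or.inl rfl), if_neg hxy,
      filter_congr fun w _ => T.isFaceAvoiding_left_iff hxy, ← filter_filter, card_filter,
      Nat.cast_sum, sum_mul]
    exact sum_congr rfl fun w _ => by split_ifs <;> simp
  rw [Div, T.alpha_comm (x := v), hα u v h, hα v u (mt T.diag_comm.mpr h),
    filter_congr fun w _ => T.isFace_comm (u := v), sum_sub_distrib, sum_sub_distrib]
  ring

theorem div_vert {a : VG} {b b' : VH} (hb : H.Adj b b') (φ : VG × VH → ℤ) :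
    T.Div φ (a, b) (a, b') = ∑ c ∈ univ.filter (G.Adj a),
      if T.diag (a, b) (c, b') then φ (c, b') - φ (a, b') else φ (c, b) - φ (a, b) := by
  have hfaces : univ.filter (T.IsFace (a, b) (a, b')) =
      (univ.filter (G.Adj a)).image (T.vertApex a b b') := by
    ext w; simp [T.isFace_vert_iff hb, eq_comm]
  have hinj : Function.Injective (T.vertApex a b b') := fun c c' h => by
    simpa [vertApex, apply_ite Prod.fst] using congrArg Prod.fst h
  rw [T.div_of_not_diag (T.not_diag_of_fst_eq (p := (a, b)) (q := (a, b')) rfl), hfaces,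
    sum_image hinj.injOn]
  refine sum_congr rfl fun c hc => ?_
  have hac : G.Adj a c := by simpa using hc
  by_cases hd : T.diag (a, b) (c, b')
  · simp [vertApex, hd, T.not_diag_of_snd_eq (p := (a, b')) (q := (c, b')) rfl]
  · have hd' : T.diag (a, b') (c, b) := by simpa [hd] using T.diag_iff_not_diag hac hb.symm
    simp [vertApex, hd, hd', T.not_diag_of_snd_eq (p := (a, b)) (q := (c, b)) rfl]

theorem alpha_transpose (u v x : VH × VG) :
    T.transpose.alpha u v x = T.alpha u.swap v.swap x.swap := by
  unfold alpha
  refine if_congr (by simp [Prod.swap_inj]) (if_congr Iff.rfl rfl ?_) rfl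
  exact congrArg _
    (card_equiv (Equiv.prodComm VH VG) fun w => by simp [T.isFaceAvoiding_transpose])

theorem div_transpose (φ : VH × VG → ℤ) (u v : VH × VG) :
    T.transpose.Div φ u v = T.Div (φ ∘ Prod.swap) u.swap v.swap := by
  rw [Div, Div, alpha_transpose, alpha_transpose]
  congr 1
  exact sum_equiv (Equiv.prodComm VH VG) (fun w => by simp [T.isFace_transpose]) fun _ _ => rfl

variable {T} {P : VG × VH → VG × VH → ℤ}

-- `T.Cartier P` unfolds to `∀ x, ∃ Φ, T.IsLocalPotential P x Φ`.
variable (T) in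
def IsLocalPotential (P : VG × VH → VG × VH → ℤ) (x : VG × VH) (Φ : VG × VH → ℤ) :
    Prop :=
  ∀ u v, T.Adj u v → (x = u ∨ x = v) → P u v = T.Div Φ u v

theorem IsLocalPotential.vert_eq {Φ : VG × VH → ℤ} {a : VG} {b b' : VH}
    (hΦ : T.IsLocalPotential P (a, b) Φ) (hb : H.Adj b b') :
    P (a, b) (a, b') = ∑ c ∈ univ.filter (G.Adj a), (Φ (c, b) - Φ (a, b)) +
      ∑ c ∈ (univ.filter (G.Adj a)).filter (fun c => T.diag (a, b) (c, b')),
        T.squareValue P a c b b' := by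
  rw [hΦ (a, b) (a, b') (.inr (.inl ⟨rfl, hb⟩)) (.inl rfl), T.div_vert hb,
    sum_filter (s := univ.filter (G.Adj a)) (p := fun c => T.diag (a, b) (c, b')),
    ← sum_add_distrib]
  refine sum_congr rfl fun c _ => ?_
  split_ifs with hd
  · rw [squareValue, if_pos hd, hΦ (a, b) (c, b') (.inr (.inr hd)) (.inl rfl), T.div_of_diag hd]
    ring
  · ring

theorem Cartier.sub_div (hP : T.Cartier P) (φ : VG × VH → ℤ) :
    T.Cartier (fun u v => P u v - T.Div φ u v) := fun x => by
  obtain ⟨Φ, hΦ⟩ := hP x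
  exact ⟨Φ - φ, fun u v huv hx => by simp only [T.div_sub, hΦ u v huv hx]⟩

theorem Cartier.transpose (hP : T.Cartier P) :
    T.transpose.Cartier (fun u v => P u.swap v.swap) := fun x => by
  obtain ⟨Φ, hΦ⟩ := hP x.swap
  refine ⟨Φ ∘ Prod.swap, fun u v huv hx => ?_⟩
  rw [div_transpose, Function.comp_assoc, Prod.swap_swap_eq, Function.comp_id]
  exact hΦ _ _ (T.adj_transpose.mp huv) (by rcases hx with rfl | rfl <;> simp)

theorem Cartier.sum_squareValue_mem_range (hsymm : ∀ u v, P u v = P v u) (hP : T.Cartier P)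
    (a : VG) :
    (fun d : H.Dart => ∑ c ∈ univ.filter (G.Adj a), T.squareValue P a c d.fst d.snd) ∈
      (H.coboundary ℤ).range := by
  choose Φ hΦ using hP
  refine ⟨fun b => ∑ c ∈ univ.filter (G.Adj a), (Φ (a, b) (c, b) - Φ (a, b) (a, b)),
    funext fun d => ?_⟩
  obtain ⟨⟨b, b'⟩, hb⟩ := d
  dsimp only at hb ⊢
  -- The diagonals at `(a, b)` and those at `(a, b')` split the squares over `{b, b'}`.
  have h := IsLocalPotential.vert_eq (hΦ (a, b)) hb
  have h' := IsLocalPotential.vert_eq (hΦ (a, b')) hb.symm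
  have hsq : ∑ c ∈ (univ.filter (G.Adj a)).filter (fun c => T.diag (a, b') (c, b)),
      T.squareValue P a c b' b = -∑ c ∈ (univ.filter (G.Adj a)).filter
        (fun c => ¬T.diag (a, b) (c, b')), T.squareValue P a c b b' := by
    rw [← sum_neg_distrib]
    refine sum_congr (filter_congr fun c hc => ?_) fun c hc => ?_
    · exact T.diag_iff_not_diag (mem_filter.mp hc).2 hb.symm
    · exact T.squareValue_swap_right (mem_filter.mp (mem_filter.mp hc).1).2 hb
  rw [hsymm, hsq] at h'
  simp only [SimpleGraph.coboundary, AddMonoidHom.mk'_apply]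
  rw [← sum_filter_add_sum_filter_not (univ.filter (G.Adj a)) (fun c => T.diag (a, b) (c, b'))
    (fun c => T.squareValue P a c b b')]
  linarith

theorem Cartier.exists_div_eq_on_diag_of_isTree_left (hT : G.IsTree)
    (hsymm : ∀ u v, P u v = P v u) (hP : T.Cartier P) :
    ∃ φ : VG × VH → ℤ, ∀ u v, T.diag u v → P u v = T.Div φ u v := by
  set w : VG → VG → H.Dart → ℤ := fun a a' d => T.squareValue P a a' d.fst d.snd
  have hanti (a a' : VG) (h : G.Adj a a') : w a' a = -w a a' :=
    funext fun d => T.squareValue_swap_left hsymm h d.adj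
  have hdiv (a : VG) : ∑ c ∈ univ.filter (G.Adj a), w a c ∈ (H.coboundary ℤ).range := by
    simpa only [w, ← sum_fn] using hP.sum_squareValue_mem_range hsymm a
  obtain ⟨ψ, hψ⟩ := hT.exists_potential (H.coboundary ℤ) hanti
    fun a a' h => hT.mem_of_sum_adj_mem _ hanti hdiv h
  refine ⟨fun p => ψ p.1 p.2, ?_⟩
  rintro ⟨a, b⟩ ⟨a', b'⟩ hd
  have h := congrFun (hψ a a' (T.diag_adj _ _ _ _ hd).1) ⟨(b, b'), (T.diag_adj _ _ _ _ hd).2⟩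
  simp only [SimpleGraph.coboundary, AddMonoidHom.mk'_apply, Pi.sub_apply, w, squareValue,
    if_pos hd] at h
  rw [T.div_of_diag hd]
  linarith

theorem Cartier.exists_div_eq_on_diag_of_isTree_right (hT : H.IsTree)
    (hsymm : ∀ u v, P u v = P v u) (hP : T.Cartier P) :
    ∃ φ : VG × VH → ℤ, ∀ u v, T.diag u v → P u v = T.Div φ u v := by
  obtain ⟨φ, hφ⟩ :=
    hP.transpose.exists_div_eq_on_diag_of_isTree_left hT (fun u v => hsymm _ _)
  exact ⟨φ ∘ Prod.swap, fun u v hd => by simpa [div_transpose] using hφ u.swap v.swap hd⟩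

theorem Cartier.exists_vert_eq_of_diag_eq_zero (hH : H.Connected) (hP : T.Cartier P)
    (hsymm : ∀ u v, P u v = P v u) (hdiag : ∀ u v, T.diag u v → P u v = 0) :
    ∃ C : VG → ℤ, ∀ a b b', H.Adj b b' → P (a, b) (a, b') = C a := by
  choose Φ hΦ using hP
  set f : VG → VH → ℤ :=
    fun a b => ∑ c ∈ univ.filter (G.Adj a), (Φ (a, b) (c, b) - Φ (a, b) (a, b))
  have hf (a : VG) (b b' : VH) (hb : H.Adj b b') : P (a, b) (a, b') = f a b := by
    rw [IsLocalPotential.vert_eq (hΦ (a, b)) hb, add_eq_left]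
    refine sum_eq_zero fun c hc => ?_
    rw [squareValue, if_pos (mem_filter.mp hc).2, hdiag _ _ (mem_filter.mp hc).2, neg_zero]
  obtain ⟨b₀⟩ := hH.nonempty
  refine ⟨fun a => f a b₀, fun a b b' hb => (hf a b b' hb).trans ?_⟩
  refine (hH.preconnected b b₀).eq_of_forall_adj_eq fun x y hxy => ?_
  rw [← hf a x y hxy, ← hf a y x hxy.symm, hsymm]

theorem Cartier.exists_eq_beta_of_diag_eq_zero (hG : G.Connected) (hH : H.Connected)
    (hP : T.Cartier P) (hsymm : ∀ u v, P u v = P v u)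
    (hdiag : ∀ u v, T.diag u v → P u v = 0) :
    ∃ (C : VG → ℤ) (D : VH → ℤ), ∀ u v, T.Adj u v → P u v = beta C D u v := by
  obtain ⟨C, hC⟩ := hP.exists_vert_eq_of_diag_eq_zero hH hsymm hdiag
  obtain ⟨D, hD⟩ := hP.transpose.exists_vert_eq_of_diag_eq_zero hG (fun u v => hsymm _ _)
    fun u v hd => hdiag _ _ hd
  refine ⟨C, D, ?_⟩
  rintro ⟨a, b⟩ ⟨a', b'⟩ (⟨hb, ha⟩ | ⟨ha, hb⟩ | hd)
  · obtain rfl : b = b' := hb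
    simpa [beta, ha.ne] using hD b a a' ha
  · obtain rfl : a = a' := ha
    simpa [beta] using hC a b b' hb
  · obtain ⟨ha, hb⟩ := T.ne_of_diag hd
    simpa [beta, ha, hb] using hdiag _ _ hd

end TriProd

theorem gamma_surjective_general {VG VH : Type*} [Fintype VG] [Fintype VH]
    (G : SimpleGraph VG) (H : SimpleGraph VH)
    (hG : G.Connected) (hH : H.Connected)
    (T : TriProd G H)
    (htree : G.IsTree ∨ H.IsTree)
    (P : VG × VH → VG × VH → ℤ) (hsymm : ∀ u v, P u v = P v u)
    (hP : T.Cartier P) :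
    ∃ (C : VG → ℤ) (D : VH → ℤ) (φ : VG × VH → ℤ),
      ∀ u v, T.Adj u v → P u v = beta C D u v + T.Div φ u v := by
  obtain ⟨φ, hφ⟩ := htree.elim (hP.exists_div_eq_on_diag_of_isTree_left · hsymm)
    (hP.exists_div_eq_on_diag_of_isTree_right · hsymm)
  obtain ⟨C, D, hCD⟩ := (hP.sub_div φ).exists_eq_beta_of_diag_eq_zero hG hH
    (fun u v => by rw [hsymm, T.div_comm]) fun u v hd => sub_eq_zero.mpr (hφ u v hd)
  exact ⟨C, D, φ, fun u v huv => by rw [← hCD u v huv]; ring⟩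

/-- If at least one of `G` or `H` is a tree, then the homomorphism
`γ : Pic(G) × Pic(H) → Pic(Δ)` induced by `β` is surjective: every Cartier divisor `P`
on the triangulated product `Δ` is, up to a principal divisor, of the form `β(C, D)`. -/
theorem gamma_surjective {VG VH : Type*} [Fintype VG] [Fintype VH]
    (G : SimpleGraph VG) (H : SimpleGraph VH)
    (hG : G.Connected) (hH : H.Connected)
    (hGe : ∃ a a', G.Adj a a') (hHe : ∃ b b', H.Adj b b')
    (T : TriProd G H)
    (htree : G.IsTree ∨ H.IsTree)
    (P : VG × VH → VG × VH → ℤ) (hsymm : ∀ u v, P u v = P v u)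
    (hP : T.Cartier P) :
    ∃ (C : VG → ℤ) (D : VH → ℤ) (φ : VG × VH → ℤ),
      ∀ u v, T.Adj u v → P u v = beta C D u v + T.Div φ u v :=
  gamma_surjective_general G H hG hH T htree P hsymm hP
end

section
/- For every divisor C on G and every divisor D on H, the divisor β(C,D) is a Cartier divisor on the triangulated product Δ. -/
open scoped Classical
open Finset

/-!
For `φ (a, b) = p a + q b`, the divisor `Div φ` vanishes on diagonal edges, and on a horizontal
edge `{(a, b), (a', b)}` it equals `∑_{b' ~ b} (q b' - q b)`: in each square over `bb'` the edge
lies in exactly one triangle, whose apex lies over `a` or over `a'`, and `α` at `(a, b)` resp.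
`(a', b)` counts the apexes over `a` resp. `a'`, so `p` and the choice of diagonals cancel out.
Symmetrically on vertical edges. Near `(a₀, b₀)` take `p = Pi.single a₁ (C a₀)` and
`q = Pi.single b₁ (D b₀)` for neighbours `a₁` of `a₀` and `b₁` of `b₀`.
-/

lemma SimpleGraph.Preconnected.exists_adj_of_adj {V : Type*} {G : SimpleGraph V}
    (hG : G.Preconnected) {u u' : V} (h : G.Adj u u') (v : V) : ∃ w, G.Adj v w :=
  have := h.nontrivial
  hG.exists_adj_of_nontrivial v

lemma SimpleGraph.sum_adj_pi_single_sub {V : Type*} [Fintype V] {G : SimpleGraph V} {v w : V}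
    (h : G.Adj v w) (c : ℤ) :
    ∑ u ∈ univ.filter (G.Adj v), ((Pi.single w c : V → ℤ) u - (Pi.single w c : V → ℤ) v) = c := by
  simp [Pi.single_eq_of_ne h.ne, sum_pi_single', h]

/-! `{(a₁, b₁), (a₁', b₁'), (a₁', b₁)}` is a face with diagonal `{(a₁, b₁), (a₁', b₁')}`; the
following lemmas locate a horizontal, vertical or diagonal side of it. -/

section Triangles

variable {VG VH : Type*} {a a' a₁ a₁' : VG} {b b' b₁ b₁' : VH} {w : VG × VH}

lemma triangle_horizontal_side (ha : a ≠ a') (hb₁ : b₁ ≠ b₁')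
    (h : ({(a, b), (a', b), w} : Finset (VG × VH)) = {(a₁, b₁), (a₁', b₁'), (a₁', b₁)}) :
    b = b₁ ∧ w = (a₁', b₁') ∧ (a = a₁ ∧ a' = a₁' ∨ a = a₁' ∧ a' = a₁) := by
  have h₁ : (a, b) ∈ ({(a₁, b₁), (a₁', b₁'), (a₁', b₁)} : Finset (VG × VH)) := h ▸ by simp
  have h₂ : (a', b) ∈ ({(a₁, b₁), (a₁', b₁'), (a₁', b₁)} : Finset (VG × VH)) := h ▸ by simp
  have h₃ : (a₁', b₁') ∈ ({(a, b), (a', b), w} : Finset (VG × VH)) := h ▸ by simp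
  simp only [mem_insert, mem_singleton, Prod.ext_iff] at h₁ h₂ h₃
  grind

lemma triangle_vertical_side (hb : b ≠ b') (ha₁ : a₁ ≠ a₁')
    (h : ({(a, b), (a, b'), w} : Finset (VG × VH)) = {(a₁, b₁), (a₁', b₁'), (a₁', b₁)}) :
    a = a₁' ∧ w = (a₁, b₁) ∧ (b = b₁ ∧ b' = b₁' ∨ b = b₁' ∧ b' = b₁) := by
  have h₁ : (a, b) ∈ ({(a₁, b₁), (a₁', b₁'), (a₁', b₁)} : Finset (VG × VH)) := h ▸ by simp
  have h₂ : (a, b') ∈ ({(a₁, b₁), (a₁', b₁'), (a₁', b₁)} : Finset (VG × VH)) := h ▸ by simp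
  have h₃ : (a₁, b₁) ∈ ({(a, b), (a, b'), w} : Finset (VG × VH)) := h ▸ by simp
  simp only [mem_insert, mem_singleton, Prod.ext_iff] at h₁ h₂ h₃
  grind

lemma triangle_diagonal_side (ha : a ≠ a') (hb : b ≠ b')
    (h : ({(a, b), (a', b'), w} : Finset (VG × VH)) = {(a₁, b₁), (a₁', b₁'), (a₁', b₁)}) :
    w = (a', b) ∨ w = (a, b') := by
  have h₁ : (a, b) ∈ ({(a₁, b₁), (a₁', b₁'), (a₁', b₁)} : Finset (VG × VH)) := h ▸ by simp
  have h₂ : (a', b') ∈ ({(a₁, b₁), (a₁', b₁'), (a₁', b₁)} : Finset (VG × VH)) := h ▸ by simp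
  have h₃ : (a₁', b₁) ∈ ({(a, b), (a', b'), w} : Finset (VG × VH)) := h ▸ by simp
  simp only [mem_insert, mem_singleton, Prod.ext_iff] at h₁ h₂ h₃
  grind

end Triangles

namespace TriProd

variable {VG VH : Type*} {G : SimpleGraph VG} {H : SimpleGraph VH} (T : TriProd G H)

lemma diag_comm_iff {a a' : VG} {b b' : VH} (ha : G.Adj a a') (hb : H.Adj b b') :
    T.diag (a, b') (a', b) ↔ ¬ T.diag (a, b) (a', b') := by
  rcases T.diag_choice a a' b b' ha hb with h | h <;> tauto

def IsFaceWithDiag (P : VG × VH → VG × VH → Prop) (u v w : VG × VH) : Prop :=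
  ∃ a a' b b', T.diag (a, b) (a', b') ∧
    ({u, v, w} : Finset (VG × VH)) = {(a, b), (a', b'), (a', b)} ∧ P (a, b) (a', b')

lemma isFace_iff_isFaceWithDiag {u v w : VG × VH} :
    T.IsFace u v w ↔ T.IsFaceWithDiag (fun _ _ => True) u v w := by
  simp [IsFace, IsFaceWithDiag]

lemma isFaceAvoiding_iff_isFaceWithDiag {u v w x : VG × VH} :
    T.IsFaceAvoiding u v w x ↔ T.IsFaceWithDiag (fun d d' => x ≠ d ∧ x ≠ d') u v w :=
  Iff.rfl

lemma isFaceWithDiag_horizontal {P : VG × VH → VG × VH → Prop} {a a' : VG} {b : VH}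
    {w : VG × VH} (ha : G.Adj a a') :
    T.IsFaceWithDiag P (a, b) (a', b) w ↔ ∃ b', H.Adj b b' ∧
      if T.diag (a, b) (a', b') then w = (a', b') ∧ P (a, b) (a', b')
      else w = (a, b') ∧ P (a', b) (a, b') := by
  constructor
  · rintro ⟨a₁, a₁', b₁, b₁', hd, hset, hP⟩
    obtain ⟨-, hb₁⟩ := T.diag_adj _ _ _ _ hd
    obtain ⟨rfl, rfl, ⟨rfl, rfl⟩ | ⟨rfl, rfl⟩⟩ := triangle_horizontal_side ha.ne hb₁.ne hset
    · exact ⟨b₁', hb₁, by simp [hd, hP]⟩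
    · have hnd := (T.diag_comm_iff ha hb₁).1 (T.diag_symm _ _ hd)
      exact ⟨b₁', hb₁, by simp [hnd, hP]⟩
  · rintro ⟨b', hb, h⟩
    split_ifs at h with hd
    · obtain ⟨rfl, hP⟩ := h
      exact ⟨a, a', b, b', hd, by rw [pair_comm], hP⟩
    · obtain ⟨rfl, hP⟩ := h
      exact ⟨a', a, b, b', T.diag_symm _ _ ((T.diag_comm_iff ha hb).2 hd),
        by rw [insert_comm, pair_comm], hP⟩

lemma isFaceWithDiag_vertical {P : VG × VH → VG × VH → Prop} {a : VG} {b b' : VH}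
    {w : VG × VH} (hb : H.Adj b b') :
    T.IsFaceWithDiag P (a, b) (a, b') w ↔ ∃ a', G.Adj a a' ∧
      if T.diag (a, b) (a', b') then w = (a', b') ∧ P (a', b') (a, b)
      else w = (a', b) ∧ P (a', b) (a, b') := by
  constructor
  · rintro ⟨a₁, a₁', b₁, b₁', hd, hset, hP⟩
    obtain ⟨ha₁, hb₁⟩ := T.diag_adj _ _ _ _ hd
    obtain ⟨rfl, rfl, ⟨rfl, rfl⟩ | ⟨rfl, rfl⟩⟩ := triangle_vertical_side hb.ne ha₁.ne hset
    · have hnd := (T.diag_comm_iff ha₁.symm hb₁).1 (T.diag_symm _ _ hd)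
      exact ⟨a₁, ha₁.symm, by simp [hnd, hP]⟩
    · exact ⟨a₁, ha₁.symm, by simp [T.diag_symm _ _ hd, hP]⟩
  · rintro ⟨a', ha, h⟩
    split_ifs at h with hd
    · obtain ⟨rfl, hP⟩ := h
      refine ⟨a', a, b', b, T.diag_symm _ _ hd, ?_, hP⟩
      ext
      simp only [mem_insert, mem_singleton]
      tauto
    · obtain ⟨rfl, hP⟩ := h
      refine ⟨a', a, b, b', T.diag_symm _ _ ((T.diag_comm_iff ha hb).2 hd), ?_, hP⟩
      ext
      simp only [mem_insert, mem_singleton]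
      tauto

lemma isFace_diagonal {a a' : VG} {b b' : VH} {w : VG × VH} (hd : T.diag (a, b) (a', b')) :
    T.IsFace (a, b) (a', b') w ↔ w = (a', b) ∨ w = (a, b') := by
  obtain ⟨ha, hb⟩ := T.diag_adj _ _ _ _ hd
  constructor
  · rintro ⟨a₁, a₁', b₁, b₁', -, hset⟩
    exact triangle_diagonal_side ha.ne hb.ne hset
  · rintro (rfl | rfl)
    · exact ⟨a, a', b, b', hd, rfl⟩
    · exact ⟨a', a, b', b, T.diag_symm _ _ hd, by rw [insert_comm]⟩

variable [Fintype VG] [Fintype VH]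

lemma filter_isFaceWithDiag_horizontal (P : VG × VH → VG × VH → Prop) {a a' : VG} (b : VH)
    (ha : G.Adj a a') :
    univ.filter (T.IsFaceWithDiag P (a, b) (a', b)) =
      ((univ.filter (H.Adj b)).filter fun b' =>
          if T.diag (a, b) (a', b') then P (a, b) (a', b') else P (a', b) (a, b')).image
        fun b' => if T.diag (a, b) (a', b') then (a', b') else (a, b') := by
  ext w
  simp only [mem_filter, mem_image, mem_univ, true_and, T.isFaceWithDiag_horizontal ha]
  refine exists_congr fun b' => ?_
  split_ifs <;> grind

lemma card_isFaceWithDiag_horizontal (P : VG × VH → VG × VH → Prop) {a a' : VG} (b : VH)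
    (ha : G.Adj a a') :
    #(univ.filter (T.IsFaceWithDiag P (a, b) (a', b))) = #{b' ∈ univ.filter (H.Adj b) |
      if T.diag (a, b) (a', b') then P (a, b) (a', b') else P (a', b) (a, b')} := by
  rw [T.filter_isFaceWithDiag_horizontal P b ha]
  refine card_image_of_injective _ fun x y h => ?_
  simpa [apply_ite Prod.snd] using congrArg Prod.snd h

lemma alpha_eq_card_of_not_diag {u v x : VG × VH} (hx : x = u ∨ x = v) (huv : ¬ T.diag u v) :
    T.alpha u v x = #(univ.filter (T.IsFaceWithDiag (fun d d' => x ≠ d ∧ x ≠ d') u v)) := by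
  rw [alpha, if_pos hx, if_neg huv]
  rfl

lemma alpha_horizontal_left {a a' : VG} (b : VH) (ha : G.Adj a a') :
    T.alpha (a, b) (a', b) (a, b) = #{b' ∈ univ.filter (H.Adj b) | ¬ T.diag (a, b) (a', b')} := by
  rw [T.alpha_eq_card_of_not_diag (Or.inl rfl) fun h => (T.diag_adj _ _ _ _ h).2.ne rfl,
    T.card_isFaceWithDiag_horizontal _ b ha]
  congr 2
  ext b'
  simp only [mem_filter, mem_univ, true_and]
  split_ifs <;> grind [ha.ne, SimpleGraph.Adj.ne]

lemma alpha_horizontal_right {a a' : VG} (b : VH) (ha : G.Adj a a') :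
    T.alpha (a, b) (a', b) (a', b) = #{b' ∈ univ.filter (H.Adj b) | T.diag (a, b) (a', b')} := by
  rw [T.alpha_eq_card_of_not_diag (Or.inr rfl) fun h => (T.diag_adj _ _ _ _ h).2.ne rfl,
    T.card_isFaceWithDiag_horizontal _ b ha]
  congr 2
  ext b'
  simp only [mem_filter, mem_univ, true_and]
  split_ifs <;> grind [ha.ne, SimpleGraph.Adj.ne]

lemma sum_isFace_horizontal {M : Type*} [AddCommMonoid M] (g : VG × VH → M) {a a' : VG}
    (b : VH) (ha : G.Adj a a') :
    ∑ w ∈ univ.filter (T.IsFace (a, b) (a', b)), g w =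
      ∑ b' ∈ univ.filter (H.Adj b), g (if T.diag (a, b) (a', b') then (a', b') else (a, b')) := by
  simp_rw [T.isFace_iff_isFaceWithDiag, T.filter_isFaceWithDiag_horizontal _ b ha, ite_self,
    filter_true]
  refine sum_image fun x _ y _ h => ?_
  simpa [apply_ite Prod.snd] using congrArg Prod.snd h

lemma div_horizontal (p : VG → ℤ) (q : VH → ℤ) {a a' : VG} (b : VH) (ha : G.Adj a a') :
    T.Div (fun x => p x.1 + q x.2) (a, b) (a', b) =
      ∑ b' ∈ univ.filter (H.Adj b), (q b' - q b) := by
  rw [Div, T.sum_isFace_horizontal _ b ha, T.alpha_horizontal_left b ha,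
    T.alpha_horizontal_right b ha, natCast_card_filter, natCast_card_filter, sum_mul, sum_mul,
    ← sum_add_distrib, ← sum_sub_distrib]
  refine sum_congr rfl fun b' _ => ?_
  split_ifs <;> ring

lemma filter_isFaceWithDiag_vertical (P : VG × VH → VG × VH → Prop) (a : VG) {b b' : VH}
    (hb : H.Adj b b') :
    univ.filter (T.IsFaceWithDiag P (a, b) (a, b')) =
      ((univ.filter (G.Adj a)).filter fun a' =>
          if T.diag (a, b) (a', b') then P (a', b') (a, b) else P (a', b) (a, b')).image
        fun a' => if T.diag (a, b) (a', b') then (a', b') else (a', b) := by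
  ext w
  simp only [mem_filter, mem_image, mem_univ, true_and, T.isFaceWithDiag_vertical hb]
  refine exists_congr fun a' => ?_
  split_ifs <;> grind

lemma card_isFaceWithDiag_vertical (P : VG × VH → VG × VH → Prop) (a : VG) {b b' : VH}
    (hb : H.Adj b b') :
    #(univ.filter (T.IsFaceWithDiag P (a, b) (a, b'))) = #{a' ∈ univ.filter (G.Adj a) |
      if T.diag (a, b) (a', b') then P (a', b') (a, b) else P (a', b) (a, b')} := by
  rw [T.filter_isFaceWithDiag_vertical P a hb]
  refine card_image_of_injective _ fun x y h => ?_
  simpa [apply_ite Prod.fst] using congrArg Prod.fst h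

lemma alpha_vertical_bot (a : VG) {b b' : VH} (hb : H.Adj b b') :
    T.alpha (a, b) (a, b') (a, b) = #{a' ∈ univ.filter (G.Adj a) | ¬ T.diag (a, b) (a', b')} := by
  rw [T.alpha_eq_card_of_not_diag (Or.inl rfl) fun h => (T.diag_adj _ _ _ _ h).1.ne rfl,
    T.card_isFaceWithDiag_vertical _ a hb]
  congr 2
  ext a'
  simp only [mem_filter, mem_univ, true_and]
  split_ifs <;> grind [hb.ne, SimpleGraph.Adj.ne]

lemma alpha_vertical_top (a : VG) {b b' : VH} (hb : H.Adj b b') :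
    T.alpha (a, b) (a, b') (a, b') = #{a' ∈ univ.filter (G.Adj a) | T.diag (a, b) (a', b')} := by
  rw [T.alpha_eq_card_of_not_diag (Or.inr rfl) fun h => (T.diag_adj _ _ _ _ h).1.ne rfl,
    T.card_isFaceWithDiag_vertical _ a hb]
  congr 2
  ext a'
  simp only [mem_filter, mem_univ, true_and]
  split_ifs <;> grind [hb.ne, SimpleGraph.Adj.ne]

lemma sum_isFace_vertical {M : Type*} [AddCommMonoid M] (g : VG × VH → M) (a : VG)
    {b b' : VH} (hb : H.Adj b b') :
    ∑ w ∈ univ.filter (T.IsFace (a, b) (a, b')), g w =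
      ∑ a' ∈ univ.filter (G.Adj a), g (if T.diag (a, b) (a', b') then (a', b') else (a', b)) := by
  simp_rw [T.isFace_iff_isFaceWithDiag, T.filter_isFaceWithDiag_vertical _ a hb, ite_self,
    filter_true]
  refine sum_image fun x _ y _ h => ?_
  simpa [apply_ite Prod.fst] using congrArg Prod.fst h

lemma div_vertical (p : VG → ℤ) (q : VH → ℤ) (a : VG) {b b' : VH} (hb : H.Adj b b') :
    T.Div (fun x => p x.1 + q x.2) (a, b) (a, b') =
      ∑ a' ∈ univ.filter (G.Adj a), (p a' - p a) := by
  rw [Div, T.sum_isFace_vertical _ a hb, T.alpha_vertical_bot a hb,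
    T.alpha_vertical_top a hb, natCast_card_filter, natCast_card_filter, sum_mul, sum_mul,
    ← sum_add_distrib, ← sum_sub_distrib]
  refine sum_congr rfl fun a' _ => ?_
  split_ifs <;> ring

lemma div_diagonal (p : VG → ℤ) (q : VH → ℤ) {a a' : VG} {b b' : VH}
    (hd : T.diag (a, b) (a', b')) :
    T.Div (fun x => p x.1 + q x.2) (a, b) (a', b') = 0 := by
  have hfaces : univ.filter (T.IsFace (a, b) (a', b')) = {(a', b), (a, b')} := by
    ext w
    simp [T.isFace_diagonal hd]
  have hne : ((a', b) : VG × VH) ≠ (a, b') :=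
    fun h => (T.diag_adj _ _ _ _ hd).1.ne (congrArg Prod.fst h).symm
  rw [Div, hfaces, sum_pair hne]
  simp only [alpha, true_or, or_true, if_true, hd]
  ring

end TriProd

/-- For every divisor `C` on `G` and every divisor `D` on `H`,
the divisor `β(C, D)` is a Cartier divisor on the triangulated product `Δ`. -/
theorem beta_cartier {VG VH : Type*} [Fintype VG] [Fintype VH]
    (G : SimpleGraph VG) (H : SimpleGraph VH)
    (hG : G.Connected) (hH : H.Connected)
    (hGe : ∃ a a', G.Adj a a') (hHe : ∃ b b', H.Adj b b')
    (T : TriProd G H)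
    (C : VG → ℤ) (D : VH → ℤ) :
    T.Cartier (beta C D) := by
  rintro ⟨a₀, b₀⟩
  obtain ⟨_, _, hG₁⟩ := hGe
  obtain ⟨_, _, hH₁⟩ := hHe
  obtain ⟨a₁, ha₁⟩ := hG.preconnected.exists_adj_of_adj hG₁ a₀
  obtain ⟨b₁, hb₁⟩ := hH.preconnected.exists_adj_of_adj hH₁ b₀
  refine ⟨fun x => (Pi.single a₁ (C a₀) : VG → ℤ) x.1 + (Pi.single b₁ (D b₀) : VH → ℤ) x.2, ?_⟩
  rintro ⟨a, b⟩ ⟨a', b'⟩ (⟨hb, ha⟩ | ⟨ha, hb⟩ | hd) hx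
  · obtain rfl : b = b' := hb
    obtain rfl : b = b₀ := by grind
    rw [T.div_horizontal _ _ b ha, SimpleGraph.sum_adj_pi_single_sub hb₁]
    simp [beta, ha.ne]
  · obtain rfl : a = a' := ha
    obtain rfl : a = a₀ := by grind
    rw [T.div_vertical _ _ a hb, SimpleGraph.sum_adj_pi_single_sub ha₁]
    simp [beta]
  · obtain ⟨ha, hb⟩ := T.diag_adj _ _ _ _ hd
    rw [T.div_diagonal _ _ hd]
    simp [beta, ha.ne, hb.ne]
end
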